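/- arXiv:0706.1398 — 3 statements merged into one kernel-verified Lean document; each statement's English description precedes it below -/
import Mathlib

section
/- For any k ≥ 1, any vectors v_1, …, v_k : σ → k and any polynomial p ∈ MvPolynomial σ k, one has constantCoeff (∂_{v_1}(∂_{v_2}(⋯(∂_{v_k} p)))) = k! · constantCoeff (∂̂_{v_1}(∂̂_{v_2}(⋯(∂̂_{v_k} p)))); that is, evaluating the k-fold iterated directional derivative at 0 equals k! times the evaluation at 0 of the k-fold iterated corrected derivative. -/
open MvPolynomial

variable {k : Type*} [Field k] [CharZero k] {σ : Type*} [Fintype σ]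

/-- The directional derivative `∂_v = Σ_i v i • ∂/∂x_i` on `MvPolynomial σ k`. -/
noncomputable def dirD (v : σ → k) (p : MvPolynomial σ k) : MvPolynomial σ k :=
  ∑ i : σ, v i • pderiv i p

/-- The corrected partial derivative `∂̂_v`: it acts on the homogeneous component of
degree `j ≥ 1` as `(1/j)·∂_v` and kills constants (the `j = 0` summand below vanishes,
since `(0 : k)⁻¹ = 0`). -/
noncomputable def hatD (v : σ → k) (p : MvPolynomial σ k) : MvPolynomial σ k :=
  ∑ᶠ j : ℕ, ((j : k)⁻¹) • dirD v (homogeneousComponent j p)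

/-!
Both sides are additive in `p`, so it suffices to take `p` homogeneous of degree `n`. Each `∂_v`
lowers the degree by one, and on degree `m` the operator `∂̂_v` is `m⁻¹ • ∂_v`; hence `d`
corrected derivatives give `(n (n - 1) ⋯ (n - d + 1))⁻¹` times the `d` ordinary ones. The
constant coefficient of the latter vanishes unless `n = d`, where the factor is `(d !)⁻¹`.
-/

theorem List.foldr_finset_sum {α ι G : Type*} [AddCommGroup G] {f : α → G → G}
    (hf : ∀ a x y, f a (x + y) = f a x + f a y) (l : List α) (s : Finset ι) (g : ι → G) :
    l.foldr f (∑ i ∈ s, g i) = ∑ i ∈ s, l.foldr f (g i) := by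
  induction l with
  | nil => rfl
  | cons a l ih => rw [List.foldr_cons, ih]; exact map_sum (AddMonoidHom.mk' (f a) (hf a)) _ _

theorem MvPolynomial.hasFiniteSupport_homogeneousComponent {σ R : Type*} [CommSemiring R]
    (p : MvPolynomial σ R) : Function.HasFiniteSupport fun j ↦ homogeneousComponent j p :=
  (Set.finite_Iic p.totalDegree).subset fun _ hj ↦
    not_lt.1 fun hlt ↦ hj (homogeneousComponent_eq_zero _ _ hlt)

section

omit [CharZero k]

variable (v : σ → k)

noncomputable def dirDerivation : Derivation k (MvPolynomial σ k) (MvPolynomial σ k) :=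
  ∑ i, v i • pderiv i

theorem dirD_eq_dirDerivation : dirD v = dirDerivation v := by
  ext p : 1
  rw [dirDerivation, ← Derivation.coeFnAddMonoidHom_apply, map_sum, Finset.sum_apply]
  rfl

theorem dirD_add (p q : MvPolynomial σ k) : dirD v (p + q) = dirD v p + dirD v q := by
  simp only [dirD_eq_dirDerivation, map_add]

variable {v}

theorem isHomogeneous_dirD {p : MvPolynomial σ k} {n : ℕ} (hp : p.IsHomogeneous n) :
    (dirD v p).IsHomogeneous (n - 1) :=
  Submodule.sum_mem (homogeneousSubmodule σ k (n - 1)) fun i _ ↦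
    Submodule.smul_mem _ (v i) hp.pderiv

theorem dirD_eq_zero_of_isHomogeneous_zero {p : MvPolynomial σ k} (hp : p.IsHomogeneous 0) :
    dirD v p = 0 := by
  rw [totalDegree_eq_zero_iff_eq_C.1 ((totalDegree_zero_iff_isHomogeneous σ).2 hp),
    dirD_eq_dirDerivation, ← algebraMap_eq, Derivation.map_algebraMap]

theorem isHomogeneous_foldr_dirD (l : List (σ → k)) {p : MvPolynomial σ k} {n : ℕ}
    (hp : p.IsHomogeneous n) : (l.foldr dirD p).IsHomogeneous (n - l.length) := by
  induction l with
  | nil => exact hp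
  | cons v l ih =>
    simpa only [List.foldr_cons, List.length_cons, Nat.sub_sub] using isHomogeneous_dirD ih

theorem foldr_dirD_eq_zero_of_lt {l : List (σ → k)} {p : MvPolynomial σ k} {n : ℕ}
    (hp : p.IsHomogeneous n) (hn : n < l.length) : l.foldr dirD p = 0 := by
  induction l with
  | nil => exact absurd hn (Nat.not_lt_zero n)
  | cons v l ih =>
    rw [List.foldr_cons]
    rcases (Nat.lt_succ_iff.1 hn).lt_or_eq with hlt | rfl
    · rw [ih hlt, dirD_eq_dirDerivation, map_zero]
    · exact dirD_eq_zero_of_isHomogeneous_zero (by simpa using isHomogeneous_foldr_dirD l hp)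

theorem constantCoeff_foldr_dirD_eq_zero {l : List (σ → k)} {p : MvPolynomial σ k} {n : ℕ}
    (hp : p.IsHomogeneous n) (hn : n ≠ l.length) : constantCoeff (l.foldr dirD p) = 0 := by
  rcases hn.lt_or_gt with hlt | hgt
  · rw [foldr_dirD_eq_zero_of_lt hp hlt, map_zero]
  · rw [constantCoeff_eq]
    exact (isHomogeneous_foldr_dirD l hp).coeff_eq_zero (by rw [map_zero]; omega)

variable (v)

theorem hatD_add (p q : MvPolynomial σ k) : hatD v (p + q) = hatD v p + hatD v q := by
  have hfin (p : MvPolynomial σ k) :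
      Function.HasFiniteSupport fun j : ℕ ↦
        (j : k)⁻¹ • dirDerivation v (homogeneousComponent j p) :=
    ((hasFiniteSupport_homogeneousComponent p).fun_comp (map_zero (dirDerivation v))).subset
      fun _ ↦ right_ne_zero_of_smul
  simp only [hatD, map_add, dirD_eq_dirDerivation, smul_add]
  exact finsum_add_distrib (hfin p) (hfin q)

theorem hatD_smul (c : k) (p : MvPolynomial σ k) : hatD v (c • p) = c • hatD v p := by
  simp only [hatD, map_smul, dirD_eq_dirDerivation, Derivation.map_smul, smul_comm _ c,
    smul_finsum]

variable {v}

theorem hatD_of_isHomogeneous {p : MvPolynomial σ k} {n : ℕ} (hp : p.IsHomogeneous n) :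
    hatD v p = (n : k)⁻¹ • dirD v p := by
  have hcomp (j : ℕ) : homogeneousComponent j p = if j = n then p else 0 :=
    homogeneousComponent_of_mem hp
  rw [hatD, finsum_eq_single _ n fun j hj ↦ by simp [hcomp, hj, dirD_eq_dirDerivation], hcomp,
    if_pos rfl]

theorem foldr_hatD_of_isHomogeneous (l : List (σ → k)) {p : MvPolynomial σ k} {n : ℕ}
    (hp : p.IsHomogeneous n) :
    l.foldr hatD p = ((n.descFactorial l.length : ℕ) : k)⁻¹ • l.foldr dirD p := by
  induction l with
  | nil => simp
  | cons v l ih =>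
    rw [List.foldr_cons, List.foldr_cons, ih, hatD_smul,
      hatD_of_isHomogeneous (isHomogeneous_foldr_dirD l hp), smul_smul, List.length_cons,
      Nat.descFactorial_succ, Nat.cast_mul, mul_inv, mul_comm]

end

theorem constantCoeff_iterated_dirD_eq_factorial_mul_general (l : List (σ → k))
    (p : MvPolynomial σ k) :
    constantCoeff (l.foldr dirD p) =
      (Nat.factorial l.length : k) * constantCoeff (l.foldr hatD p) := by
  rw [← sum_homogeneousComponent p, List.foldr_finset_sum dirD_add,
    List.foldr_finset_sum hatD_add, map_sum, map_sum, Finset.mul_sum]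
  refine Finset.sum_congr rfl fun n _ ↦ ?_
  have hp := homogeneousComponent_isHomogeneous n p
  rw [foldr_hatD_of_isHomogeneous l hp, constantCoeff_smul, smul_eq_mul]
  obtain rfl | hn := eq_or_ne n l.length
  · rw [Nat.descFactorial_self,
      mul_inv_cancel_left₀ (Nat.cast_ne_zero.2 (Nat.factorial_ne_zero _))]
  · rw [constantCoeff_foldr_dirD_eq_zero hp hn, mul_zero, mul_zero]

/-- Evaluating the `k`-fold iterated directional derivative at `0` equals `k!` times the
evaluation at `0` of the `k`-fold iterated corrected derivative:
`(∂_{v₁}⋯∂_{v_k} p)(0) = k! · (∂̂_{v₁}⋯∂̂_{v_k} p)(0)`. -/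
theorem constantCoeff_iterated_dirD_eq_factorial_mul (l : List (σ → k)) (hl : l ≠ [])
    (p : MvPolynomial σ k) :
    constantCoeff (l.foldr dirD p) =
      (Nat.factorial l.length : k) * constantCoeff (l.foldr hatD p) :=
  constantCoeff_iterated_dirD_eq_factorial_mul_general l p
end

section
/- Assume that for every a ∈ A the set { d : ι →₀ ℕ | deg(d) = a } is finite (i.e. every A-graded component of the polynomial ring with deg x_i = α i is finite dimensional). Then the subsemigroup A_+ generated in A by the α i meets its negative only trivially: for every a ∈ A, if a lies in the additive submonoid of A generated by the set {α i : i ∈ ι} and −a also lies in that submonoid, then a = 0. -/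
/-! A monomial `x^d` of degree `a` and one `x^e` of degree `-a` multiply to monomials
`x^(n(d+e))` of degree `0` for every `n`; finiteness of the degree-`0` component forces
`d + e = 0`, hence `d = 0` and `a = deg(d) = 0`. -/

variable {A : Type*} [AddCommGroup A] {ι : Type*} [Fintype ι]

/-- The `A`-degree of the monomial `x^d` in the grading determined by `deg x_i = α i`. -/
def monDeg (α : ι → A) (d : ι →₀ ℕ) : A :=
  ∑ i : ι, (d i) • (α i)

theorem AddSubmonoid.eq_bot_of_finite {M : Type*} [AddMonoid M] [IsLeftCancelAdd M]
    [IsAddTorsionFree M] (S : AddSubmonoid M) (hS : (S : Set M).Finite) : S = ⊥ := by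
  refine (eq_bot_iff_forall S).2 fun x hx => ?_
  obtain ⟨m, n, hmn, hmul⟩ :=
    hS.exists_lt_map_eq_of_forall_mem (f := fun n : ℕ => n • x) fun n => nsmul_mem hx n
  obtain ⟨k, rfl⟩ := Nat.exists_eq_add_of_lt hmn
  have hk : (k + 1) • x = (k + 1) • 0 := by
    rw [nsmul_zero]
    refine add_left_cancel (a := m • x) ?_
    rw [← add_nsmul, add_zero, ← add_assoc]
    exact hmul.symm
  exact (nsmul_right_inj k.succ_ne_zero).1 hk

theorem monDeg_zero (α : ι → A) : monDeg α 0 = 0 := by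
  simp [monDeg]

theorem monDeg_add (α : ι → A) (d e : ι →₀ ℕ) :
    monDeg α (d + e) = monDeg α d + monDeg α e := by
  simp [monDeg, add_smul, Finset.sum_add_distrib]

def monDegHom (α : ι → A) : (ι →₀ ℕ) →+ A where
  toFun := monDeg α
  map_zero' := monDeg_zero α
  map_add' := monDeg_add α

theorem exists_monDeg_eq_of_mem_closure (α : ι → A) {a : A}
    (ha : a ∈ AddSubmonoid.closure (Set.range α)) : ∃ d : ι →₀ ℕ, monDeg α d = a := by
  obtain ⟨d, rfl⟩ := AddSubmonoid.mem_closure_range_iff_of_fintype.1 ha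
  exact ⟨Finsupp.equivFunOnFinite.symm d, rfl⟩

/-- If every `A`-graded component of the polynomial ring is finite dimensional, then the
subsemigroup `A₊` generated by the `α i` meets its negative only trivially:
`A₊ ∩ (−A₊) = {0}`. -/
theorem pos_cone_inter_neg_cone (α : ι → A)
    (hfin : ∀ a : A, {d : ι →₀ ℕ | monDeg α d = a}.Finite)
    (a : A) (ha : a ∈ AddSubmonoid.closure (Set.range α))
    (ha' : -a ∈ AddSubmonoid.closure (Set.range α)) : a = 0 := by
  obtain ⟨d, rfl⟩ := exists_monDeg_eq_of_mem_closure α ha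
  obtain ⟨e, he⟩ := exists_monDeg_eq_of_mem_closure α ha'
  have hker : AddMonoidHom.mker (monDegHom α) = ⊥ :=
    AddSubmonoid.eq_bot_of_finite _ (hfin 0)
  have hde : d + e = 0 := by
    rw [← AddSubmonoid.mem_bot, ← hker, AddMonoidHom.mem_mker]
    exact (monDeg_add α d e).trans (by rw [he, add_neg_cancel])
  rw [(add_eq_zero.1 hde).1, monDeg_zero]
end

section
/- V(B) is the union of the coordinate subspaces V(Γ), where Γ runs over the subsets of I that are minimal (with respect to inclusion) among all subsets not contained in any member σ of F: a point x : I → k lies in V(B) if and only if there exists a subset Γ ⊆ I such that (i) Γ is not contained in any σ ∈ F, (ii) every proper subset of Γ is contained in some σ ∈ F, and (iii) x i = 0 for all i ∈ Γ. -/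
variable {k : Type*} [Field k] {I : Type*} [Fintype I] [DecidableEq I]


/-- `V(B)` is the union of the coordinate subspaces `V(Γ)` over the subsets `Γ ⊆ I` that are
minimal among subsets not contained in any member of `F`: a point `x` lies in the common
zero locus of the monomials `∏_{i ∉ σ} x_i`, `σ ∈ F`, iff there is a subset `Γ` such that
(i) `Γ` is contained in no `σ ∈ F`, (ii) every proper subset of `Γ` is contained in some
`σ ∈ F`, and (iii) `x` vanishes on `Γ`. -/
theorem VB_eq_union_minimal (F : Finset (Finset I)) (x : I → k) :
    (∀ σ ∈ F, ∏ i ∈ σᶜ, x i = 0) ↔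
      ∃ Γ : Finset I, (∀ σ ∈ F, ¬ Γ ⊆ σ) ∧
        (∀ Γ' : Finset I, Γ' ⊂ Γ → ∃ σ ∈ F, Γ' ⊆ σ) ∧
        (∀ i ∈ Γ, x i = 0) := by
  classical
  constructor
  · intro h
    set Z : Finset I := Finset.univ.filter (fun i => x i = 0) with hZ
    have hZnot : ∀ σ ∈ F, ¬ Z ⊆ σ := by
      intro σ hσ hsub
      have := h σ hσ
      obtain ⟨i, hi, hxi⟩ := Finset.prod_eq_zero_iff.mp this
      exact (Finset.mem_compl.mp hi) (hsub (by simp [hZ, hxi]))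
    set T : Finset (Finset I) :=
      Z.powerset.filter (fun Γ => ∀ σ ∈ F, ¬ Γ ⊆ σ) with hT
    have hZT : Z ∈ T := by
      simp only [hT, Finset.mem_filter, Finset.mem_powerset]
      exact ⟨Finset.Subset.refl _, hZnot⟩
    obtain ⟨Γ, hΓT, hmin⟩ := T.exists_min_image (fun Γ => Γ.card) ⟨Z, hZT⟩
    simp only [hT, Finset.mem_filter, Finset.mem_powerset] at hΓT
    refine ⟨Γ, hΓT.2, ?_, ?_⟩
    · intro Γ' hΓ'
      by_contra hc
      push_neg at hc
      have hΓ'T : Γ' ∈ T := by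
        simp only [hT, Finset.mem_filter, Finset.mem_powerset]
        exact ⟨hΓ'.subset.trans hΓT.1, hc⟩
      exact absurd (hmin Γ' hΓ'T) (not_le.mpr (Finset.card_lt_card hΓ'))
    · intro i hi
      have := hΓT.1 hi
      simpa [hZ] using this
  · rintro ⟨Γ, h1, _, h3⟩ σ hσ
    obtain ⟨i, hiΓ, hiσ⟩ := Finset.not_subset.mp (h1 σ hσ)
    exact Finset.prod_eq_zero (Finset.mem_compl.mpr hiσ) (h3 i hiΓ)
end
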